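/- Let H be a cocommutative Hopf algebra over k. For every n and every h₁,…,hₙ ∈ H, Shₙ(ρₙ(h₁⊗⋯⊗hₙ)) = Σ_{p+q=n} Σ_σ sign(σ) (h_{σ(1)}⊗⋯⊗h_{σ(p)}) ⊗ (h_{σ(p+1)}⊗⋯⊗h_{σ(n)}), where σ runs over all (p,q)-shuffles; that is, the composite of the diagonal map ρₙ with the shuffle map equals the unshuffle (deconcatenation-by-shuffles) coproduct. -/

import Mathlib

/-!
Statement 3: Let `H` be a cocommutative Hopf algebra over a field `k` of characteristic
zero. For every `n` and all `h₁,…,hₙ ∈ H`,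
`Shₙ(ρₙ(h₁⊗⋯⊗hₙ)) = Σ_{p+q=n} Σ_σ sign(σ) (h_{σ(1)}⊗⋯⊗h_{σ(p)}) ⊗ (h_{σ(p+1)}⊗⋯⊗h_{σ(n)})`,
where `σ` runs over all `(p,q)`-shuffles, `ρₙ(h₁⊗⋯⊗hₙ) = (h₁⁽¹⁾⊗⋯⊗hₙ⁽¹⁾) ⊗ (h₁⁽²⁾⊗⋯⊗hₙ⁽²⁾)`
and `Sh = ⊕_{p+q=n} sh_{p,q}` is the shuffle map.  We state the `(p,q)`-component of
this identity for each `p + q = n`; `(p,q)`-shuffles are encoded by the `p`-element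
subsets `S` of `Fin n` (the set `σ{1,…,p}`), with `Finset.orderIsoOfFin` enumerating
`S` and `Sᶜ` in increasing order.
-/

open TensorProduct

noncomputable section

namespace HopfCyclicStmt

variable (k : Type) [Field k]

/-! ### Iterated tensor powers and basic operations -/

section TP
variable (A : Type) [Ring A] [Algebra k A]

/-- Bundled iterated tensor powers of `A` over `k` (right-nested). -/
def TPobj : ℕ → ModuleCat k
  | 0 => ModuleCat.of k k
  | n + 1 => ModuleCat.of k (A ⊗[k] (TPobj n))

/-- `TP k A n` is the `n`-fold tensor power `A ⊗ ⋯ ⊗ A` of `A` over `k`,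
with `TP k A 0 = k` and `TP k A (n+1) = A ⊗ TP k A n`. -/
def TP (n : ℕ) : Type := TPobj k A n

instance (n : ℕ) : AddCommGroup (TP k A n) := inferInstanceAs (AddCommGroup (TPobj k A n))
instance (n : ℕ) : Module k (TP k A n) := inferInstanceAs (Module k (TPobj k A n))

/-- The pure tensor `h₁ ⊗ ⋯ ⊗ hₙ` as an element of `TP k A n`. -/
def tp : ∀ n, (Fin n → A) → TP k A n
  | 0, _ => (1 : k)
  | n + 1, f => f 0 ⊗ₜ[k] tp n (fun i => f i.succ)

/-- Transport along an equality of lengths. -/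
def castTP {m n : ℕ} (h : m = n) : TP k A m ≃ₗ[k] TP k A n :=
  h ▸ LinearEquiv.refl k (TP k A m)

/-- Multiply the `i`-th and `(i+1)`-st tensor factors (`0`-indexed). -/
def mulAt : ∀ (n : ℕ), Fin (n + 1) → (TP k A (n + 2) →ₗ[k] TP k A (n + 1))
  | n, ⟨0, _⟩ =>
      (LinearMap.rTensor (TP k A n) (LinearMap.mul' k A)
        ∘ₗ (TensorProduct.assoc k A A (TP k A n)).symm.toLinearMap :
          A ⊗[k] (A ⊗[k] TP k A n) →ₗ[k] A ⊗[k] TP k A n)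
  | n + 1, ⟨j + 1, h⟩ => LinearMap.lTensor A (mulAt n ⟨j, by omega⟩)
  | 0, ⟨j + 1, h⟩ => absurd h (by omega)

/-- Apply the counit `counitA` to the `i`-th tensor factor (`0`-indexed). -/
def dropAt (counitA : A →ₗ[k] k) : ∀ (n : ℕ), Fin (n + 1) → (TP k A (n + 1) →ₗ[k] TP k A n)
  | n, ⟨0, _⟩ =>
      (TensorProduct.lid k (TP k A n)).toLinearMap ∘ₗ LinearMap.rTensor (TP k A n) counitA
  | n + 1, ⟨j + 1, h⟩ => LinearMap.lTensor A (dropAt counitA n ⟨j, by omega⟩)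
  | 0, ⟨j + 1, h⟩ => absurd h (by omega)

/-- Apply the comultiplication `comulA` to the `i`-th tensor factor (`0`-indexed). -/
def comulAt (comulA : A →ₗ[k] A ⊗[k] A) : ∀ (n : ℕ), Fin n → (TP k A n →ₗ[k] TP k A (n + 1))
  | n + 1, ⟨0, _⟩ =>
      (TensorProduct.assoc k A A (TP k A n)).toLinearMap ∘ₗ LinearMap.rTensor (TP k A n) comulA
  | n + 2, ⟨j + 1, h⟩ => LinearMap.lTensor A (comulAt comulA (n + 1) ⟨j, by omega⟩)
  | 1, ⟨j + 1, h⟩ => absurd h (by omega)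
  | 0, i => absurd i.2 (by omega)

/-- Prepend a `1` in front: `x ↦ 1 ⊗ x`. -/
def cons1 (n : ℕ) : TP k A n →ₗ[k] TP k A (n + 1) := TensorProduct.mk k A (TP k A n) 1

/-- Append a tensor factor at the end. -/
def snoc : ∀ (n : ℕ), TP k A n ⊗[k] A →ₗ[k] TP k A (n + 1)
  | 0 => (TensorProduct.comm k k A).toLinearMap
  | n + 1 =>
      LinearMap.lTensor A (snoc n) ∘ₗ (TensorProduct.assoc k A (TP k A n) A).toLinearMap

/-- Append a `1` at the end: `x ↦ x ⊗ 1`. -/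
def snoc1 (n : ℕ) : TP k A n →ₗ[k] TP k A (n + 1) :=
  snoc k A n ∘ₗ (TensorProduct.mk k (TP k A n) A).flip 1

/-- Insert a `1` right after the `i`-th tensor factor. -/
def insertOneAt : ∀ (n : ℕ), Fin (n + 1) → (TP k A (n + 1) →ₗ[k] TP k A (n + 2))
  | n, ⟨0, _⟩ => LinearMap.lTensor A (cons1 k A n)
  | n + 1, ⟨j + 1, h⟩ => LinearMap.lTensor A (insertOneAt n ⟨j, by omega⟩)
  | 0, ⟨j + 1, h⟩ => absurd h (by omega)

/-- Pull the last tensor factor to the front. -/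
def lastSplit : ∀ (n : ℕ), TP k A (n + 1) →ₗ[k] A ⊗[k] TP k A n
  | 0 => LinearMap.id
  | n + 1 =>
      (TensorProduct.leftComm k A A (TP k A n)).toLinearMap
        ∘ₗ LinearMap.lTensor A (lastSplit n)

/-- Apply the counit to every factor. -/
def epsAll (counitA : A →ₗ[k] k) : ∀ (n : ℕ), TP k A n →ₗ[k] k
  | 0 => LinearMap.id
  | n + 1 =>
      (TensorProduct.lid k k).toLinearMap
        ∘ₗ TensorProduct.map counitA (epsAll counitA n)

/-- The diagonal (left) action of `A` on `TP k A (n+1)` with respect to the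
comultiplication `comulA`: `h · (h₀ ⊗ ⋯ ⊗ hₙ) = h⁽¹⁾h₀ ⊗ ⋯ ⊗ h⁽ⁿ⁺¹⁾hₙ`. -/
def diagTP (comulA : A →ₗ[k] A ⊗[k] A) : ∀ (n : ℕ), A ⊗[k] TP k A (n + 1) →ₗ[k] TP k A (n + 1)
  | 0 =>
      (LinearMap.rTensor k (LinearMap.mul' k A)
        ∘ₗ (TensorProduct.assoc k A A k).symm.toLinearMap :
          A ⊗[k] (A ⊗[k] k) →ₗ[k] A ⊗[k] k)
  | n + 1 =>
      TensorProduct.map (LinearMap.mul' k A) (diagTP comulA n)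
        ∘ₗ (TensorProduct.tensorTensorTensorComm k A A A (TP k A (n + 1))).toLinearMap
        ∘ₗ LinearMap.rTensor (A ⊗[k] TP k A (n + 1)) comulA

/-- The diagonal right coaction of `A` on `TP k A n`:
`h₀ ⊗ ⋯ ⊗ hₙ ↦ (h₀⁽¹⁾ ⊗ ⋯ ⊗ hₙ⁽¹⁾) ⊗ (h₀⁽²⁾ ⋯ hₙ⁽²⁾)`. -/
def codiagTP (comulA : A →ₗ[k] A ⊗[k] A) : ∀ (n : ℕ), TP k A n →ₗ[k] TP k A n ⊗[k] A
  | 0 => (TensorProduct.mk k (TP k A 0) A).flip 1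
  | n + 1 =>
      (LinearMap.lTensor (A ⊗[k] TP k A n) (LinearMap.mul' k A)
        ∘ₗ (TensorProduct.tensorTensorTensorComm k A A (TP k A n) A).toLinearMap
        ∘ₗ TensorProduct.map comulA (codiagTP comulA n) :
          TP k A (n + 1) →ₗ[k] (A ⊗[k] TP k A n) ⊗[k] A)

end TP

/-! ### Rearrangement of tensor powers of tensor products, and the diagonal -/

section Diag
variable (A B : Type) [Ring A] [Algebra k A] [Ring B] [Algebra k B]

/-- The rearrangement `(a₀⊗b₀) ⊗ ⋯ ⊗ (aₙ⊗bₙ) ↦ (a₀⊗⋯⊗aₙ) ⊗ (b₀⊗⋯⊗bₙ)`. -/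
def OmegaTP : ∀ (n : ℕ), TP k (A ⊗[k] B) n ≃ₗ[k] TP k A n ⊗[k] TP k B n
  | 0 => (TensorProduct.lid k k).symm
  | n + 1 =>
      (TensorProduct.congr (LinearEquiv.refl k (A ⊗[k] B)) (OmegaTP n)) ≪≫ₗ
        TensorProduct.tensorTensorTensorComm k A B (TP k A n) (TP k B n)

/-- Apply the comultiplication to every tensor factor:
`h₁ ⊗ ⋯ ⊗ hₙ ↦ (h₁⁽¹⁾⊗h₁⁽²⁾) ⊗ ⋯ ⊗ (hₙ⁽¹⁾⊗hₙ⁽²⁾)` in `TP k (A ⊗ A) n`. -/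
def TPdiag (comulA : A →ₗ[k] A ⊗[k] A) : ∀ (n : ℕ), TP k A n →ₗ[k] TP k (A ⊗[k] A) n
  | 0 => LinearMap.id
  | n + 1 => TensorProduct.map comulA (TPdiag comulA n)

end Diag

/-! ### Shuffles -/

section Shuffle
variable (A : Type) [Ring A] [Algebra k A]

/-- The subset of `Fin n` obtained from a subset of `Fin (n+1)` by removing `0`
and shifting down. -/
def tailSet {n : ℕ} (S : Finset (Fin (n + 1))) : Finset (Fin n) :=
  Finset.univ.filter (fun i : Fin n => i.succ ∈ S)

lemma tailSet_card_mem {n : ℕ} (S : Finset (Fin (n + 1))) (h : (0 : Fin (n + 1)) ∈ S) :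
    (tailSet S).card + 1 = S.card := by
  classical
  have h1 : S.card = ∑ x : Fin (n + 1), if x ∈ S then 1 else 0 := by
    rw [← Finset.card_filter]
    congr 1
    simp [Finset.filter_mem_eq_inter]
  rw [h1, Fin.sum_univ_succ, if_pos h]
  have h2 : (tailSet S).card = ∑ i : Fin n, if i.succ ∈ S then 1 else 0 := by
    rw [tailSet, Finset.card_filter]
  omega

lemma tailSet_card_not_mem {n : ℕ} (S : Finset (Fin (n + 1))) (h : (0 : Fin (n + 1)) ∉ S) :
    (tailSet S).card = S.card := by
  classical
  have h1 : S.card = ∑ x : Fin (n + 1), if x ∈ S then 1 else 0 := by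
    rw [← Finset.card_filter]
    congr 1
    simp [Finset.filter_mem_eq_inter]
  rw [h1, Fin.sum_univ_succ, if_neg h]
  have h2 : (tailSet S).card = ∑ i : Fin n, if i.succ ∈ S then 1 else 0 := by
    rw [tailSet, Finset.card_filter]
  omega

lemma tailSet_compl {n : ℕ} (S : Finset (Fin (n + 1))) :
    (tailSet S)ᶜ = tailSet Sᶜ := by
  classical
  ext i
  simp [tailSet]

lemma card_compl_eq {n p q : ℕ} (hpq : p + q = n) (S : Finset (Fin n)) (hS : S.card = p) :
    Sᶜ.card = q := by
  have h1 := Finset.card_compl S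
  have h2 := Finset.card_le_univ S
  simp only [Fintype.card_fin] at h1
  simp only [Fintype.card_fin] at h2
  omega

set_option maxHeartbeats 2000000 in
/-- Split a tensor power according to a subset `S` of the positions: the factors in
positions belonging to `S` are collected (in order) into the first output, those in the
complementary positions into the second output. -/
def splitTP : ∀ (n : ℕ) (S : Finset (Fin n)), TP k A n →ₗ[k] TP k A S.card ⊗[k] TP k A Sᶜ.card
  | 0, S =>
      (TensorProduct.congr
          (castTP k A (show 0 = S.card by
            rw [Finset.eq_empty_of_isEmpty S, Finset.card_empty]))
          (castTP k A (show 0 = Sᶜ.card by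
            rw [Finset.eq_empty_of_isEmpty Sᶜ, Finset.card_empty]))).toLinearMap
        ∘ₗ (TensorProduct.lid k (TP k A 0)).symm.toLinearMap
  | n + 1, S =>
      if h0 : (0 : Fin (n + 1)) ∈ S then
        ((TensorProduct.congr
            (castTP k A (by simpa using tailSet_card_mem S h0) :
                TP k A ((tailSet S).card + 1) ≃ₗ[k] TP k A S.card)
            (castTP k A (by
              rw [tailSet_compl]
              exact tailSet_card_not_mem Sᶜ (by simpa using h0)))).toLinearMap
          ∘ₗ (TensorProduct.assoc k A (TP k A (tailSet S).card)
                (TP k A (tailSet S)ᶜ.card)).symm.toLinearMap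
          ∘ₗ LinearMap.lTensor A (splitTP n (tailSet S)) :
            A ⊗[k] TP k A n →ₗ[k] TP k A S.card ⊗[k] TP k A Sᶜ.card)
      else
        ((TensorProduct.congr
            (castTP k A (tailSet_card_not_mem S h0))
            (castTP k A (by
              rw [tailSet_compl]
              simpa using tailSet_card_mem Sᶜ (by simpa using h0)) :
                TP k A ((tailSet S)ᶜ.card + 1) ≃ₗ[k] TP k A Sᶜ.card)).toLinearMap
          ∘ₗ (TensorProduct.leftComm k A (TP k A (tailSet S).card)
                (TP k A (tailSet S)ᶜ.card)).toLinearMap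
          ∘ₗ LinearMap.lTensor A (splitTP n (tailSet S)) :
            A ⊗[k] TP k A n →ₗ[k] TP k A S.card ⊗[k] TP k A Sᶜ.card)

/-- The sign of the `(p,q)`-shuffle associated to a subset `S ⊆ {0,…,n−1}` of
cardinality `p` (the shuffle placing the positions in `S` first, in order): the parity
of the number of pairs `(a, b) ∈ S × Sᶜ` with `b < a`. -/
def shuffleSign {n : ℕ} (S : Finset (Fin n)) : ℤ :=
  (-1) ^ (∑ a ∈ S, (Sᶜ.filter (· < a)).card)

/-- Keep the tensor factors in positions belonging to `S` (in order) and apply the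
counit to all the other factors. -/
def keepTP (counitA : A →ₗ[k] k) (n : ℕ) (S : Finset (Fin n)) :
    TP k A n →ₗ[k] TP k A S.card :=
  (TensorProduct.rid k (TP k A S.card)).toLinearMap
    ∘ₗ LinearMap.lTensor (TP k A S.card) (epsAll k A counitA Sᶜ.card)
    ∘ₗ splitTP k A n S

/-- The component `∪_{p,q} : A^{⊗n} → A^{⊗p} ⊗ A^{⊗q}` of the unshuffle coproduct:
`∪_{p,q}(h₁⊗⋯⊗hₙ) = Σ_σ sign(σ) (h_{σ(1)}⊗⋯⊗h_{σ(p)}) ⊗ (h_{σ(p+1)}⊗⋯⊗h_{σ(n)})`,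
where `σ` runs over all `(p,q)`-shuffles. -/
def cupTP (n p q : ℕ) (hpq : p + q = n) : TP k A n →ₗ[k] TP k A p ⊗[k] TP k A q :=
  ∑ S : {S : Finset (Fin n) // S.card = p},
    shuffleSign S.1 •
      ((TensorProduct.congr (castTP k A S.2)
          (castTP k A (card_compl_eq hpq S.1 S.2))).toLinearMap
        ∘ₗ splitTP k A n S.1)

/-- The shuffle map `sh_{p,q} : A^{⊗n} ⊗ A^{⊗n} → A^{⊗p} ⊗ A^{⊗q}` (for `p + q = n`):
the signed sum over all `(p,q)`-shuffles `σ` of the map applying the counit to the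
factors in positions `σ(p+1),…,σ(n)` of the first copy and in positions `σ(1),…,σ(p)`
of the second copy. -/
def shTP (counitA : A →ₗ[k] k) (n p q : ℕ) (hpq : p + q = n) :
    TP k A n ⊗[k] TP k A n →ₗ[k] TP k A p ⊗[k] TP k A q :=
  ∑ S : {S : Finset (Fin n) // S.card = p},
    shuffleSign S.1 •
      TensorProduct.map
        ((castTP k A S.2).toLinearMap ∘ₗ keepTP k A counitA n S.1)
        ((castTP k A (card_compl_eq hpq S.1 S.2)).toLinearMap ∘ₗ keepTP k A counitA n S.1ᶜ)

end Shuffle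

/-! ### The Connes–Moscovici style cocyclic module `C^n(H, M) = M ⊗_H H^{⊗(n+1)}` -/

section CMcochain
variable (A M : Type) [Ring A] [Algebra k A] [AddCommGroup M] [Module k M]

/-- The coface maps of the cocyclic module `C(H,M)` at the level of
`M ⊗ H^{⊗(n+1)}`: for `i ≤ n` the comultiplication is applied to the `i`-th factor,
and for `i = n+1` we take the flip-over coface
`m ⊗ h₀ ⊗ ⋯ ⊗ hₙ ↦ m⁽⁰⁾ ⊗ h₀⁽²⁾ ⊗ h₁ ⊗ ⋯ ⊗ hₙ ⊗ m⁽⁻¹⁾h₀⁽¹⁾`. -/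
def cofaceCM (comulA : A →ₗ[k] A ⊗[k] A) (coact : M →ₗ[k] A ⊗[k] M) (n : ℕ)
    (i : Fin (n + 2)) : M ⊗[k] TP k A (n + 1) →ₗ[k] M ⊗[k] TP k A (n + 2) :=
  if h : i.val ≤ n then
    LinearMap.lTensor M (comulAt k A comulA (n + 1) ⟨i.val, by omega⟩)
  else
    LinearMap.lTensor M
        (snoc k A (n + 1) ∘ₗ (TensorProduct.comm k A (TP k A (n + 1))).toLinearMap)
      ∘ₗ (TensorProduct.leftComm k A M (TP k A (n + 1))).toLinearMap
      ∘ₗ LinearMap.rTensor (M ⊗[k] TP k A (n + 1)) (LinearMap.mul' k A)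
      ∘ₗ (TensorProduct.tensorTensorTensorComm k A M A (TP k A (n + 1))).toLinearMap
      ∘ₗ ((LinearMap.rTensor (TP k A (n + 2)) coact
      ∘ₗ LinearMap.lTensor M (comulAt k A comulA (n + 1) ⟨0, by omega⟩) :
        M ⊗[k] TP k A (n + 1) →ₗ[k] (A ⊗[k] M) ⊗[k] TP k A (n + 2)) :
        M ⊗[k] TP k A (n + 1) →ₗ[k] (A ⊗[k] M) ⊗[k] (A ⊗[k] TP k A (n + 1)))

/-- The codegeneracy maps of the cocyclic module `C(H,M)` at the level of
`M ⊗ H^{⊗(n+2)}`: `σᵢ` applies the counit to the `(i+1)`-st factor. -/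
def codegenCM (counitA : A →ₗ[k] k) (n : ℕ) (i : Fin (n + 1)) :
    M ⊗[k] TP k A (n + 2) →ₗ[k] M ⊗[k] TP k A (n + 1) :=
  LinearMap.lTensor M (dropAt k A counitA (n + 1) ⟨i.val + 1, by omega⟩)

/-- The cocyclic operator of `C(H,M)` at the level of `M ⊗ H^{⊗(n+1)}`:
`τₙ(m ⊗ h₀ ⊗ ⋯ ⊗ hₙ) = m⁽⁰⁾ ⊗ h₁ ⊗ ⋯ ⊗ hₙ ⊗ m⁽⁻¹⁾h₀`. -/
def tauCM (coact : M →ₗ[k] A ⊗[k] M) (n : ℕ) :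
    M ⊗[k] TP k A (n + 1) →ₗ[k] M ⊗[k] TP k A (n + 1) :=
  LinearMap.lTensor M (snoc k A n ∘ₗ (TensorProduct.comm k A (TP k A n)).toLinearMap)
    ∘ₗ (TensorProduct.leftComm k A M (TP k A n)).toLinearMap
    ∘ₗ LinearMap.rTensor (M ⊗[k] TP k A n) (LinearMap.mul' k A)
    ∘ₗ (TensorProduct.tensorTensorTensorComm k A M A (TP k A n)).toLinearMap
    ∘ₗ LinearMap.rTensor (TP k A (n + 1)) coact

/-- The relators defining `C^n(H, M) = M ⊗_H H^{⊗(n+1)}` as a quotient of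
`M ⊗ H^{⊗(n+1)}`: the span of all `m·h ⊗ t − m ⊗ h·t`, where `h` acts diagonally
(through the comultiplication) on `t ∈ H^{⊗(n+1)}`. -/
def cmRel (comulA : A →ₗ[k] A ⊗[k] A) (act : M →ₗ[k] A →ₗ[k] M) (n : ℕ) :
    Submodule k (M ⊗[k] TP k A (n + 1)) :=
  Submodule.span k {x | ∃ (m : M) (h : A) (t : TP k A (n + 1)),
    x = act m h ⊗ₜ[k] t - m ⊗ₜ[k] diagTP k A comulA n (h ⊗ₜ[k] t)}

/-- The Hopf-cyclic cochain space `C^n(H, M) = M ⊗_H H^{⊗(n+1)}`. -/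
def CM (comulA : A →ₗ[k] A ⊗[k] A) (act : M →ₗ[k] A →ₗ[k] M) (n : ℕ) : Type :=
  (M ⊗[k] TP k A (n + 1)) ⧸ cmRel k A M comulA act n

instance (comulA : A →ₗ[k] A ⊗[k] A) (act : M →ₗ[k] A →ₗ[k] M) (n : ℕ) :
    AddCommGroup (CM k A M comulA act n) :=
  inferInstanceAs (AddCommGroup ((M ⊗[k] TP k A (n + 1)) ⧸ cmRel k A M comulA act n))

instance (comulA : A →ₗ[k] A ⊗[k] A) (act : M →ₗ[k] A →ₗ[k] M) (n : ℕ) :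
    Module k (CM k A M comulA act n) :=
  inferInstanceAs (Module k ((M ⊗[k] TP k A (n + 1)) ⧸ cmRel k A M comulA act n))

/-- The canonical projection `M ⊗ H^{⊗(n+1)} → C^n(H,M)`. -/
def cmMk (comulA : A →ₗ[k] A ⊗[k] A) (act : M →ₗ[k] A →ₗ[k] M) (n : ℕ) :
    M ⊗[k] TP k A (n + 1) →ₗ[k] CM k A M comulA act n :=
  (cmRel k A M comulA act n).mkQ

end CMcochain

/-! ### The cyclic module `C̃ₙ(H,M)` (Hopf-cyclic homology) -/

section CyChain
variable (A M : Type) [Ring A] [Algebra k A] [AddCommGroup M] [Module k M]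

/-- The cyclic operator `τₙ(h₀ ⊗ ⋯ ⊗ hₙ ⊗ m) = hₙ⁽¹⁾ ⊗ h₀ ⊗ ⋯ ⊗ h_{n-1} ⊗ hₙ⁽²⁾·m`
at the level of `H^{⊗(n+1)} ⊗ M`. -/
def tauCy (comulA : A →ₗ[k] A ⊗[k] A) (act : A →ₗ[k] M →ₗ[k] M) (n : ℕ) :
    TP k A (n + 1) ⊗[k] M →ₗ[k] TP k A (n + 1) ⊗[k] M :=
  TensorProduct.map LinearMap.id (TensorProduct.lift act)
    ∘ₗ (TensorProduct.tensorTensorTensorComm k A A (TP k A n) M).toLinearMap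
    ∘ₗ (TensorProduct.assoc k (A ⊗[k] A) (TP k A n) M).toLinearMap
    ∘ₗ LinearMap.rTensor M (LinearMap.rTensor (TP k A n) comulA)
    ∘ₗ LinearMap.rTensor M (lastSplit k A n)

/-- The face maps of `C̃(H,M)` at the level of `H^{⊗(n+2)} ⊗ M`: for `i ≤ n`,
`δᵢ` multiplies the `i`-th and `(i+1)`-st factors; the last face is
`δ_{n+1}(h₀ ⊗ ⋯ ⊗ h_{n+1} ⊗ m) = h_{n+1}⁽¹⁾h₀ ⊗ h₁ ⊗ ⋯ ⊗ hₙ ⊗ h_{n+1}⁽²⁾·m`. -/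
def faceCy (comulA : A →ₗ[k] A ⊗[k] A) (act : A →ₗ[k] M →ₗ[k] M) (n : ℕ)
    (i : Fin (n + 2)) : TP k A (n + 2) ⊗[k] M →ₗ[k] TP k A (n + 1) ⊗[k] M :=
  if h : i.val ≤ n then
    LinearMap.rTensor M (mulAt k A n ⟨i.val, by omega⟩)
  else
    LinearMap.rTensor M (mulAt k A n ⟨0, by omega⟩)
      ∘ₗ tauCy k A M comulA act (n + 1)

/-- The degeneracy maps of `C̃(H,M)` at the level of `H^{⊗(n+1)} ⊗ M`: `σᵢ` inserts a
`1` after the `i`-th tensor factor. -/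
def degenCy (n : ℕ) (i : Fin (n + 1)) :
    TP k A (n + 1) ⊗[k] M →ₗ[k] TP k A (n + 2) ⊗[k] M :=
  LinearMap.rTensor M (insertOneAt k A n i)

/-- The map whose kernel is the cotensor product `H^{⊗(n+1)} □_H M`
(diagonal right coaction on `H^{⊗(n+1)}`, left coaction `coact` on `M`). -/
def cotensorMapCy (comulA : A →ₗ[k] A ⊗[k] A) (coact : M →ₗ[k] A ⊗[k] M) (n : ℕ) :
    TP k A (n + 1) ⊗[k] M →ₗ[k] TP k A (n + 1) ⊗[k] (A ⊗[k] M) :=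
  (TensorProduct.assoc k (TP k A (n + 1)) A M).toLinearMap
      ∘ₗ LinearMap.rTensor M (codiagTP k A comulA (n + 1))
    - LinearMap.lTensor (TP k A (n + 1)) coact

/-- The cotensor product `C̃ₙ(H,M) = H^{⊗(n+1)} □_H M`, as a submodule of
`H^{⊗(n+1)} ⊗ M`. -/
def cotensorCy (comulA : A →ₗ[k] A ⊗[k] A) (coact : M →ₗ[k] A ⊗[k] M) (n : ℕ) :
    Submodule k (TP k A (n + 1) ⊗[k] M) :=
  LinearMap.ker (cotensorMapCy k A M comulA coact n)

end CyChain

/-! ### (Stable) anti-Yetter–Drinfeld conditions -/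

section AYD

variable (A M : Type) [Ring A] [Algebra k A] [AddCommGroup M] [Module k M]

/-- `M` is a right `A`-module via the bilinear map `act`. -/
def IsRightAction (act : M →ₗ[k] A →ₗ[k] M) : Prop :=
  (∀ m : M, act m 1 = m) ∧ ∀ (m : M) (a b : A), act (act m a) b = act m (a * b)

/-- `M` is a left `A`-module via the bilinear map `act`. -/
def IsLeftAction (act : A →ₗ[k] M →ₗ[k] M) : Prop :=
  (∀ m : M, act 1 m = m) ∧ ∀ (a b : A) (m : M), act a (act b m) = act (a * b) m

/-- `coact` makes `M` a left `A`-comodule, with respect to the comultiplication `comulA`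
and counit `counitA`. -/
def IsLeftCoaction (comulA : A →ₗ[k] A ⊗[k] A) (counitA : A →ₗ[k] k)
    (coact : M →ₗ[k] A ⊗[k] M) : Prop :=
  (LinearMap.rTensor M comulA ∘ₗ coact
      = (TensorProduct.assoc k A A M).symm.toLinearMap ∘ₗ LinearMap.lTensor A coact ∘ₗ coact)
  ∧ ∀ m : M, (TensorProduct.lid k M) (LinearMap.rTensor M counitA (coact m)) = m

/-- The iterated comultiplication `h ↦ h⁽¹⁾ ⊗ (h⁽²⁾ ⊗ h⁽³⁾)`. -/
def comul₂ (comulA : A →ₗ[k] A ⊗[k] A) : A →ₗ[k] A ⊗[k] (A ⊗[k] A) :=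
  LinearMap.lTensor A comulA ∘ₗ comulA

/-- The linear map `(a ⊗ m) ⊗ (h₁ ⊗ (h₂ ⊗ h₃)) ↦ (S(h₃) * a * h₁) ⊗ (m · h₂)`,
the right-hand side of the (right-module, left-comodule) anti-Yetter–Drinfeld
condition. -/
def aydRHS (antipodeA : A →ₗ[k] A) (act : M →ₗ[k] A →ₗ[k] M) :
    (A ⊗[k] M) ⊗[k] (A ⊗[k] (A ⊗[k] A)) →ₗ[k] A ⊗[k] M :=
  TensorProduct.map (LinearMap.mul' k A ∘ₗ LinearMap.lTensor A (LinearMap.mul' k A))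
      (TensorProduct.lift act)
    ∘ₗ (TensorProduct.assoc k A (A ⊗[k] A) (M ⊗[k] A)).symm.toLinearMap
    ∘ₗ (TensorProduct.leftComm k (A ⊗[k] A) A (M ⊗[k] A)).toLinearMap
    ∘ₗ LinearMap.lTensor (A ⊗[k] A)
        ((TensorProduct.leftComm k M A A).toLinearMap
          ∘ₗ LinearMap.lTensor M (TensorProduct.comm k A A).toLinearMap)
    ∘ₗ (TensorProduct.tensorTensorTensorComm k A M A (A ⊗[k] A)).toLinearMap
    ∘ₗ LinearMap.lTensor (A ⊗[k] M) (LinearMap.lTensor A (LinearMap.lTensor A antipodeA))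

/-- The anti-Yetter–Drinfeld compatibility condition
`φ(m·h) = S(h⁽³⁾) m⁽⁻¹⁾ h⁽¹⁾ ⊗ m⁽⁰⁾·h⁽²⁾`, written without Sweedler notation. -/
def IsAYD (comulA : A →ₗ[k] A ⊗[k] A) (antipodeA : A →ₗ[k] A)
    (act : M →ₗ[k] A →ₗ[k] M) (coact : M →ₗ[k] A ⊗[k] M) : Prop :=
  ∀ (m : M) (h : A),
    coact (act m h) = aydRHS k A M antipodeA act (coact m ⊗ₜ[k] comul₂ k A comulA h)

/-- The stability condition `m⁽⁰⁾ · m⁽⁻¹⁾ = m` for a right module, left comodule. -/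
def IsStable (act : M →ₗ[k] A →ₗ[k] M) (coact : M →ₗ[k] A ⊗[k] M) : Prop :=
  ∀ m : M, TensorProduct.lift act (TensorProduct.comm k A M (coact m)) = m

/-- The linear map `(h₁ ⊗ (h₂ ⊗ h₃)) ⊗ (a ⊗ m) ↦ (h₁ * a * S(h₃)) ⊗ (h₂ · m)`,
the right-hand side of the left-left anti-Yetter–Drinfeld condition. -/
def llAydRHS (antipodeA : A →ₗ[k] A) (act : A →ₗ[k] M →ₗ[k] M) :
    (A ⊗[k] (A ⊗[k] A)) ⊗[k] (A ⊗[k] M) →ₗ[k] A ⊗[k] M :=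
  TensorProduct.map (LinearMap.mul' k A) (TensorProduct.lift act)
    ∘ₗ (TensorProduct.tensorTensorTensorComm k A A A M).toLinearMap
    ∘ₗ LinearMap.rTensor (A ⊗[k] M)
        ((TensorProduct.comm k A A).toLinearMap
          ∘ₗ LinearMap.lTensor A (LinearMap.mul' k A)
          ∘ₗ (TensorProduct.assoc k A A A).toLinearMap
          ∘ₗ LinearMap.rTensor A (TensorProduct.comm k A A).toLinearMap)
    ∘ₗ (TensorProduct.tensorTensorTensorComm k (A ⊗[k] A) A A M).toLinearMap
    ∘ₗ LinearMap.rTensor (A ⊗[k] M) (TensorProduct.assoc k A A A).symm.toLinearMap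
    ∘ₗ LinearMap.rTensor (A ⊗[k] M) (LinearMap.lTensor A (LinearMap.lTensor A antipodeA))

/-- The left-left anti-Yetter–Drinfeld condition
`φ(h·m) = h⁽¹⁾ m⁽⁻¹⁾ S(h⁽³⁾) ⊗ h⁽²⁾·m⁽⁰⁾`. -/
def IsLLAYD (comulA : A →ₗ[k] A ⊗[k] A) (antipodeA : A →ₗ[k] A)
    (act : A →ₗ[k] M →ₗ[k] M) (coact : M →ₗ[k] A ⊗[k] M) : Prop :=
  ∀ (h : A) (m : M),
    coact (act h m) = llAydRHS k A M antipodeA act (comul₂ k A comulA h ⊗ₜ[k] coact m)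

/-- The stability condition `m⁽⁻¹⁾ · m⁽⁰⁾ = m` for a left module, left comodule. -/
def IsLLStable (act : A →ₗ[k] M →ₗ[k] M) (coact : M →ₗ[k] A ⊗[k] M) : Prop :=
  ∀ m : M, TensorProduct.lift act (coact m) = m

end AYD

/-! ### Tensor products of (co)module structures -/

section TensorStructures

variable (A B M N : Type) [Ring A] [Algebra k A] [Ring B] [Algebra k B]
variable [AddCommGroup M] [Module k M] [AddCommGroup N] [Module k N]

/-- The componentwise right action of `A ⊗ B` on `M ⊗ N`. -/
def tensorAct (actM : M →ₗ[k] A →ₗ[k] M) (actN : N →ₗ[k] B →ₗ[k] N) :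
    M ⊗[k] N →ₗ[k] (A ⊗[k] B) →ₗ[k] M ⊗[k] N :=
  TensorProduct.curry
    (TensorProduct.map (TensorProduct.lift actM) (TensorProduct.lift actN)
      ∘ₗ (TensorProduct.tensorTensorTensorComm k M N A B).toLinearMap)

/-- The componentwise left action of `A ⊗ B` on `M ⊗ N`. -/
def tensorLAct (actM : A →ₗ[k] M →ₗ[k] M) (actN : B →ₗ[k] N →ₗ[k] N) :
    (A ⊗[k] B) →ₗ[k] M ⊗[k] N →ₗ[k] M ⊗[k] N :=
  TensorProduct.curry
    (TensorProduct.map (TensorProduct.lift actM) (TensorProduct.lift actN)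
      ∘ₗ (TensorProduct.tensorTensorTensorComm k A B M N).toLinearMap)

/-- The coaction `m ⊗ n ↦ (m⁽⁻¹⁾ ⊗ n⁽⁻¹⁾) ⊗ (m⁽⁰⁾ ⊗ n⁽⁰⁾)` of `A ⊗ B` on `M ⊗ N`. -/
def tensorCoact (coactM : M →ₗ[k] A ⊗[k] M) (coactN : N →ₗ[k] B ⊗[k] N) :
    M ⊗[k] N →ₗ[k] (A ⊗[k] B) ⊗[k] (M ⊗[k] N) :=
  (TensorProduct.tensorTensorTensorComm k A M B N).toLinearMap
    ∘ₗ TensorProduct.map coactM coactN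

/-- The comultiplication `(a ⊗ b) ↦ (a⁽¹⁾ ⊗ b⁽¹⁾) ⊗ (a⁽²⁾ ⊗ b⁽²⁾)` of a tensor product. -/
def tensorComul (comulA : A →ₗ[k] A ⊗[k] A) (comulB : B →ₗ[k] B ⊗[k] B) :
    (A ⊗[k] B) →ₗ[k] (A ⊗[k] B) ⊗[k] (A ⊗[k] B) :=
  (TensorProduct.tensorTensorTensorComm k A A B B).toLinearMap
    ∘ₗ TensorProduct.map comulA comulB

/-- The antipode `S ⊗ S` of a tensor product. -/
def tensorAntipode (antipodeA : A →ₗ[k] A) (antipodeB : B →ₗ[k] B) :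
    (A ⊗[k] B) →ₗ[k] A ⊗[k] B :=
  TensorProduct.map antipodeA antipodeB

/-- The rearrangement
`(m ⊗ n) ⊗ ((a₀⊗b₀) ⊗ ⋯ ⊗ (aₙ⊗bₙ)) ↦ (m ⊗ a₀⊗⋯⊗aₙ) ⊗ (n ⊗ b₀⊗⋯⊗bₙ)`
identifying the underlying space of `C^n(A ⊗ B, M ⊗ N)` with the tensor product of
those of `C^n(A, M)` and `C^n(B, N)`. -/
def OmegaCM (n : ℕ) :
    (M ⊗[k] N) ⊗[k] TP k (A ⊗[k] B) (n + 1) ≃ₗ[k]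
      (M ⊗[k] TP k A (n + 1)) ⊗[k] (N ⊗[k] TP k B (n + 1)) :=
  TensorProduct.congr (LinearEquiv.refl k (M ⊗[k] N)) (OmegaTP k A B (n + 1)) ≪≫ₗ
    TensorProduct.tensorTensorTensorComm k M N (TP k A (n + 1)) (TP k B (n + 1))

/-- The rearrangement
`((a₀⊗b₀) ⊗ ⋯ ⊗ (aₙ⊗bₙ)) ⊗ (m ⊗ n) ↦ (a₀⊗⋯⊗aₙ ⊗ m) ⊗ (b₀⊗⋯⊗bₙ ⊗ n)`
identifying the underlying space of `C̃ₙ(A ⊗ B, M ⊗ N)` with the tensor product of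
those of `C̃ₙ(A, M)` and `C̃ₙ(B, N)`. -/
def OmegaCy (n : ℕ) :
    TP k (A ⊗[k] B) (n + 1) ⊗[k] (M ⊗[k] N) ≃ₗ[k]
      (TP k A (n + 1) ⊗[k] M) ⊗[k] (TP k B (n + 1) ⊗[k] N) :=
  TensorProduct.congr (OmegaTP k A B (n + 1)) (LinearEquiv.refl k (M ⊗[k] N)) ≪≫ₗ
    TensorProduct.tensorTensorTensorComm k (TP k A (n + 1)) (TP k B (n + 1)) M N

end TensorStructures

end HopfCyclicStmt

open HopfCyclicStmt

variable (k : Type) [Field k] [CharZero k]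
variable (H : Type) [Ring H] [HopfAlgebra k H]

/-- The map `ρₙ : H^{⊗n} → H^{⊗n} ⊗ H^{⊗n}`,
`ρₙ(h₁⊗⋯⊗hₙ) = (h₁⁽¹⁾⊗⋯⊗hₙ⁽¹⁾) ⊗ (h₁⁽²⁾⊗⋯⊗hₙ⁽²⁾)`. -/
def rhoCM (n : ℕ) : TP k H n →ₗ[k] TP k H n ⊗[k] TP k H n :=
  (OmegaTP k H H n).toLinearMap ∘ₗ TPdiag k H (Coalgebra.comul) n

/-!
Write `ε` for the counit and `S` for the positions `σ(1),…,σ(p)` of a shuffle. Up to its sign,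
the `S`-summand of `Sh ∘ ρ` sends `h₁ ⊗ ⋯ ⊗ hₙ` to
`(⊗_{i ∈ S} hᵢ⁽¹⁾ ε(hᵢ⁽²⁾)) ⊗ (⊗_{j ∉ S} ε(hⱼ⁽¹⁾) hⱼ⁽²⁾)`, and by the counit laws this is
`(⊗_{i ∈ S} hᵢ) ⊗ (⊗_{j ∉ S} hⱼ)`, the `S`-summand of the unshuffle coproduct. Formally this is
an induction on `n` that splits off the first tensor factor and uses one of the two counit
laws according to whether `0 ∈ S`.
-/

section CounitLaws

variable {R C M₁ M₂ X Y : Type*} [CommSemiring R] [AddCommMonoid C] [Module R C]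
  [Coalgebra R C] [AddCommMonoid M₁] [Module R M₁] [AddCommMonoid M₂] [Module R M₂]
  [AddCommMonoid X] [Module R X] [AddCommMonoid Y] [Module R Y]

theorem map_lTensor_counit_tensorTensorTensorComm_comul (f : M₁ →ₗ[R] X) (g : M₂ →ₗ[R] Y)
    (c : C) (w : M₁ ⊗[R] M₂) :
    TensorProduct.map (f.lTensor C)
        (g ∘ₗ (TensorProduct.lid R M₂).toLinearMap ∘ₗ Coalgebra.counit.rTensor M₂)
        (TensorProduct.tensorTensorTensorComm R C C M₁ M₂ (Coalgebra.comul c ⊗ₜ w))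
      = (TensorProduct.assoc R C X Y).symm (c ⊗ₜ TensorProduct.map f g w) := by
  induction w using TensorProduct.induction_on with
  | zero => simp
  | add u v hu hv => simp only [TensorProduct.tmul_add, map_add, hu, hv]
  | tmul m₁ m₂ =>
    have hc : TensorProduct.rid R C (Coalgebra.counit.lTensor C (Coalgebra.comul c)) = c := by
      simp
    conv_rhs => rw [← hc]
    induction Coalgebra.comul (R := R) c using TensorProduct.induction_on with
    | zero => simp
    | add u v hu hv => simp only [TensorProduct.add_tmul, map_add, hu, hv]
    | tmul c₁ c₂ => simp [TensorProduct.smul_tmul]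

theorem map_counit_lTensor_tensorTensorTensorComm_comul (f : M₁ →ₗ[R] X) (g : M₂ →ₗ[R] Y)
    (c : C) (w : M₁ ⊗[R] M₂) :
    TensorProduct.map
        (f ∘ₗ (TensorProduct.lid R M₁).toLinearMap ∘ₗ Coalgebra.counit.rTensor M₁)
        (g.lTensor C)
        (TensorProduct.tensorTensorTensorComm R C C M₁ M₂ (Coalgebra.comul c ⊗ₜ w))
      = TensorProduct.leftComm R C X Y (c ⊗ₜ TensorProduct.map f g w) := by
  induction w using TensorProduct.induction_on with
  | zero => simp
  | add u v hu hv => simp only [TensorProduct.tmul_add, map_add, hu, hv]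
  | tmul m₁ m₂ =>
    have hc : TensorProduct.lid R C (Coalgebra.counit.rTensor C (Coalgebra.comul c)) = c := by
      simp
    conv_rhs => rw [← hc]
    induction Coalgebra.comul (R := R) c using TensorProduct.induction_on with
    | zero => simp
    | add u v hu hv => simp only [TensorProduct.add_tmul, map_add, hu, hv]
    | tmul c₁ c₂ => simp [TensorProduct.smul_tmul]

end CounitLaws

namespace HopfCyclicStmt

section TensorPower

variable {K A : Type} [Field K] [Ring A] [Algebra K A]

variable (K A) in
/-- `TP K A (m + 1)` is `A ⊗ TP K A m` by definition; naming the identification keeps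
rewriting type-correct. -/
def tpSuccEquiv (m : ℕ) : A ⊗[K] TP K A m ≃ₗ[K] TP K A (m + 1) :=
  LinearEquiv.refl K _

theorem tpSuccEquiv_tmul_tp {m : ℕ} (a : A) (g : Fin m → A) :
    tpSuccEquiv K A m (a ⊗ₜ tp K A m g) = tp K A (m + 1) (Fin.cons a g) :=
  rfl

theorem linearMap_ext_tpSuccEquiv {M : Type} [AddCommGroup M] [Module K M] {m : ℕ}
    {F G : TP K A (m + 1) →ₗ[K] M}
    (hFG : ∀ (a : A) (x : TP K A m),
      F (tpSuccEquiv K A m (a ⊗ₜ x)) = G (tpSuccEquiv K A m (a ⊗ₜ x))) :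
    F = G := by
  ext y
  obtain ⟨y, rfl⟩ := (tpSuccEquiv K A m).surjective y
  exact LinearMap.congr_fun (TensorProduct.ext' (g := F ∘ₗ (tpSuccEquiv K A m).toLinearMap)
    (h := G ∘ₗ (tpSuccEquiv K A m).toLinearMap) hFG) y

theorem linearMap_ext_tpZero {M : Type} [AddCommGroup M] [Module K M] {F G : TP K A 0 →ₗ[K] M}
    (h : F (tp K A 0 Fin.elim0) = G (tp K A 0 Fin.elim0)) : F = G :=
  LinearMap.ext_ring h

theorem castTP_tp_comp_orderEmbOfFin {N m m' : ℕ} (h : m = m') (S : Finset (Fin N))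
    (hm : S.card = m) (f : Fin N → A) :
    castTP K A h (tp K A m (f ∘ S.orderEmbOfFin hm))
      = tp K A m' (f ∘ S.orderEmbOfFin (hm.trans h)) := by
  subst h
  rfl

theorem epsAll_castTP (ε : A →ₗ[K] K) {m m' : ℕ} (h : m = m') (x : TP K A m) :
    epsAll K A ε m' (castTP K A h x) = epsAll K A ε m x := by
  subst h
  rfl

theorem epsAll_tpSuccEquiv (ε : A →ₗ[K] K) {m : ℕ} (a : A) (x : TP K A m) :
    epsAll K A ε (m + 1) (tpSuccEquiv K A m (a ⊗ₜ x)) = ε a * epsAll K A ε m x := by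
  change TensorProduct.lid K K (ε a ⊗ₜ[K] epsAll K A ε m x) = _
  simp

end TensorPower

section Shuffles

variable {n : ℕ} {S : Finset (Fin (n + 1))} {T : Finset (Fin n)}

theorem mem_tailSet {i : Fin n} : i ∈ tailSet S ↔ i.succ ∈ S := by
  simp [tailSet]

theorem orderEmbOfFin_of_zero_mem (hT : tailSet S = T) (h0 : 0 ∈ S) (h : S.card = T.card + 1) :
    ⇑(S.orderEmbOfFin h) = Fin.cons 0 (Fin.succ ∘ T.orderEmbOfFin rfl) := by
  subst hT
  refine (Finset.orderEmbOfFin_unique h (fun i => ?_) ?_).symm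
  · cases i using Fin.cases with
    | zero => exact h0
    | succ i => exact mem_tailSet.mp (Finset.orderEmbOfFin_mem _ rfl i)
  · exact Fin.strictMono_cons.mpr
      ⟨fun _ => Fin.succ_pos _, Fin.strictMono_succ.comp (Finset.orderEmbOfFin _ _).strictMono⟩

theorem orderEmbOfFin_of_tailSet_card_eq (hT : tailSet S = T) (h : S.card = T.card) :
    ⇑(S.orderEmbOfFin h) = Fin.succ ∘ T.orderEmbOfFin rfl := by
  subst hT
  refine (Finset.orderEmbOfFin_unique h (fun i => ?_) ?_).symm
  · exact mem_tailSet.mp (Finset.orderEmbOfFin_mem _ rfl i)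
  · exact Fin.strictMono_succ.comp (Finset.orderEmbOfFin _ _).strictMono

end Shuffles

section SplitTP

variable {K A : Type} [Field K] [Ring A] [Algebra K A]

theorem splitTP_tpSuccEquiv_of_mem {n : ℕ} {S : Finset (Fin (n + 1))} (h0 : 0 ∈ S) (a : A)
    (x : TP K A n) :
    splitTP K A (n + 1) S (tpSuccEquiv K A n (a ⊗ₜ x))
      = TensorProduct.congr ((tpSuccEquiv K A _).trans (castTP K A (tailSet_card_mem S h0)))
          (castTP K A (by rw [tailSet_compl]; exact tailSet_card_not_mem Sᶜ (by simpa using h0)))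
          ((TensorProduct.assoc K A _ _).symm (a ⊗ₜ splitTP K A n (tailSet S) x)) := by
  rw [splitTP.eq_2]
  simp only [h0, ↓reduceDIte]
  rfl

theorem splitTP_tpSuccEquiv_of_not_mem {n : ℕ} {S : Finset (Fin (n + 1))} (h0 : 0 ∉ S) (a : A)
    (x : TP K A n) :
    splitTP K A (n + 1) S (tpSuccEquiv K A n (a ⊗ₜ x))
      = TensorProduct.congr (castTP K A (tailSet_card_not_mem S h0))
          ((tpSuccEquiv K A _).trans
            (castTP K A (by rw [tailSet_compl]; exact tailSet_card_mem Sᶜ (by simpa using h0))))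
          (TensorProduct.leftComm K A _ _ (a ⊗ₜ splitTP K A n (tailSet S) x)) := by
  rw [splitTP.eq_2]
  simp only [h0, ↓reduceDIte]
  rfl

theorem splitTP_tp (n : ℕ) (S : Finset (Fin n)) (f : Fin n → A) :
    splitTP K A n S (tp K A n f)
      = tp K A S.card (f ∘ S.orderEmbOfFin rfl) ⊗ₜ tp K A Sᶜ.card (f ∘ Sᶜ.orderEmbOfFin rfl) := by
  induction n with
  | zero =>
    have hS : S.card = 0 := by simp [Finset.eq_empty_of_isEmpty S]
    have hSc : Sᶜ.card = 0 := by simp [Finset.eq_empty_of_isEmpty Sᶜ]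
    exact congrArg₂ (· ⊗ₜ[K] ·) (castTP_tp_comp_orderEmbOfFin _ S hS f)
      (castTP_tp_comp_orderEmbOfFin _ Sᶜ hSc f)
  | succ n ih =>
    have hf : tp K A (n + 1) f = tpSuccEquiv K A n (f 0 ⊗ₜ tp K A n (f ∘ Fin.succ)) := rfl
    by_cases h0 : (0 : Fin (n + 1)) ∈ S
    · have hS : S.card = (tailSet S).card + 1 := (tailSet_card_mem S h0).symm
      have hSc : Sᶜ.card = (tailSet S)ᶜ.card := by
        rw [tailSet_compl]; exact (tailSet_card_not_mem Sᶜ (by simpa using h0)).symm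
      rw [hf, splitTP_tpSuccEquiv_of_mem h0, ih, TensorProduct.assoc_symm_tmul,
        TensorProduct.congr_tmul, LinearEquiv.trans_apply, tpSuccEquiv_tmul_tp]
      simp only [Function.comp_assoc]
      rw [← Fin.comp_cons, ← orderEmbOfFin_of_zero_mem rfl h0 hS,
        ← orderEmbOfFin_of_tailSet_card_eq (tailSet_compl S).symm hSc,
        castTP_tp_comp_orderEmbOfFin, castTP_tp_comp_orderEmbOfFin]
    · have hS : S.card = (tailSet S).card := (tailSet_card_not_mem S h0).symm
      have hSc : Sᶜ.card = (tailSet S)ᶜ.card + 1 := by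
        rw [tailSet_compl]; exact (tailSet_card_mem Sᶜ (by simpa using h0)).symm
      rw [hf, splitTP_tpSuccEquiv_of_not_mem h0, ih, TensorProduct.leftComm_tmul,
        TensorProduct.congr_tmul, LinearEquiv.trans_apply, tpSuccEquiv_tmul_tp]
      simp only [Function.comp_assoc]
      rw [← Fin.comp_cons,
        ← orderEmbOfFin_of_zero_mem (tailSet_compl S).symm (by simpa using h0) hSc,
        ← orderEmbOfFin_of_tailSet_card_eq rfl hS,
        castTP_tp_comp_orderEmbOfFin, castTP_tp_comp_orderEmbOfFin]

theorem cupTP_tp (n p q : ℕ) (hpq : p + q = n) (f : Fin n → A) :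
    cupTP K A n p q hpq (tp K A n f)
      = ∑ S : {S : Finset (Fin n) // S.card = p},
          shuffleSign S.1 •
            (tp K A p (fun i => f (S.1.orderIsoOfFin S.2 i))
              ⊗ₜ[K] tp K A q (fun i => f (S.1ᶜ.orderIsoOfFin (card_compl_eq hpq S.1 S.2) i))) := by
  simp only [cupTP, LinearMap.sum_apply, LinearMap.smul_apply, LinearMap.comp_apply,
    LinearEquiv.coe_coe, splitTP_tp, TensorProduct.congr_tmul, castTP_tp_comp_orderEmbOfFin,
    Finset.coe_orderIsoOfFin_apply]
  rfl

end SplitTP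

section KeepTP

variable {K A : Type} [Field K] [Ring A] [Algebra K A] (ε : A →ₗ[K] K)

theorem keepTP_zero (S : Finset (Fin 0)) (h : 0 = S.card) :
    keepTP K A ε 0 S = (castTP K A h).toLinearMap := by
  have hc : 0 = Sᶜ.card := by simp [Finset.eq_empty_of_isEmpty Sᶜ]
  refine linearMap_ext_tpZero ?_
  simp only [keepTP, LinearMap.comp_apply, LinearEquiv.coe_coe, splitTP_tp,
    LinearMap.lTensor_tmul, TensorProduct.rid_tmul]
  rw [← castTP_tp_comp_orderEmbOfFin h S h.symm, ← castTP_tp_comp_orderEmbOfFin hc Sᶜ hc.symm,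
    epsAll_castTP]
  exact one_smul K _

variable {n : ℕ} {S : Finset (Fin (n + 1))} {T : Finset (Fin n)}

theorem keepTP_succ_comp_of_mem (hT : tailSet S = T) (h0 : 0 ∈ S) (h : T.card + 1 = S.card) :
    keepTP K A ε (n + 1) S ∘ₗ (tpSuccEquiv K A n).toLinearMap
      = ((tpSuccEquiv K A T.card).trans (castTP K A h)).toLinearMap
          ∘ₗ (keepTP K A ε n T).lTensor A := by
  subst hT
  refine TensorProduct.ext' fun a x => ?_
  simp only [keepTP, LinearMap.comp_apply, LinearEquiv.coe_coe, splitTP_tpSuccEquiv_of_mem h0,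
    LinearMap.lTensor_tmul]
  induction splitTP K A n (tailSet S) x using TensorProduct.induction_on with
  | zero => simp
  | add u v hu hv => simp only [TensorProduct.tmul_add, map_add, hu, hv]
  | tmul y z => simp [epsAll_castTP]

theorem keepTP_succ_comp_of_not_mem (hT : tailSet S = T) (h0 : 0 ∉ S) (h : T.card = S.card) :
    keepTP K A ε (n + 1) S ∘ₗ (tpSuccEquiv K A n).toLinearMap
      = (castTP K A h).toLinearMap ∘ₗ keepTP K A ε n T
          ∘ₗ (TensorProduct.lid K (TP K A n)).toLinearMap ∘ₗ ε.rTensor (TP K A n) := by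
  subst hT
  refine TensorProduct.ext' fun a x => ?_
  simp only [keepTP, LinearMap.comp_apply, LinearEquiv.coe_coe, splitTP_tpSuccEquiv_of_not_mem h0,
    LinearMap.rTensor_tmul, TensorProduct.lid_tmul, map_smul]
  induction splitTP K A n (tailSet S) x using TensorProduct.induction_on with
  | zero => simp
  | add u v hu hv => simp only [TensorProduct.tmul_add, map_add, smul_add, hu, hv]
  | tmul y z => simp [epsAll_castTP, epsAll_tpSuccEquiv, mul_smul]

end KeepTP

section Diagonal

variable {K A B : Type} [Field K] [Ring A] [Algebra K A] [Ring B] [Algebra K B] {n : ℕ}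

theorem TPdiag_tpSuccEquiv (Δ : A →ₗ[K] A ⊗[K] A) (a : A) (x : TP K A n) :
    TPdiag K A Δ (n + 1) (tpSuccEquiv K A n (a ⊗ₜ x))
      = tpSuccEquiv K (A ⊗[K] A) n (Δ a ⊗ₜ TPdiag K A Δ n x) :=
  rfl

theorem OmegaTP_tpSuccEquiv (c : A ⊗[K] B) (x : TP K (A ⊗[K] B) n) :
    OmegaTP K A B (n + 1) (tpSuccEquiv K (A ⊗[K] B) n (c ⊗ₜ x))
      = TensorProduct.map (tpSuccEquiv K A n).toLinearMap (tpSuccEquiv K B n).toLinearMap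
          (TensorProduct.tensorTensorTensorComm K A B _ _ (c ⊗ₜ OmegaTP K A B n x)) := by
  change TensorProduct.tensorTensorTensorComm K A B _ _
    (TensorProduct.congr (LinearEquiv.refl K (A ⊗[K] B)) (OmegaTP K A B n) (c ⊗ₜ x)) = _
  rw [TensorProduct.congr_tmul]
  exact (LinearMap.congr_fun TensorProduct.map_id _).symm

end Diagonal

section Bialgebra

variable {K A : Type} [Field K] [Ring A] [Bialgebra K A]

theorem map_keepTP_comp_OmegaTP_TPdiag (n : ℕ) (S : Finset (Fin n)) :
    TensorProduct.map (keepTP K A Coalgebra.counit n S) (keepTP K A Coalgebra.counit n Sᶜ)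
        ∘ₗ (OmegaTP K A A n).toLinearMap ∘ₗ TPdiag K A Coalgebra.comul n
      = splitTP K A n S := by
  induction n with
  | zero =>
    have hS : 0 = S.card := by simp [Finset.eq_empty_of_isEmpty S]
    have hSc : 0 = Sᶜ.card := by simp [Finset.eq_empty_of_isEmpty Sᶜ]
    refine linearMap_ext_tpZero ?_
    change TensorProduct.map _ _ (tp K A 0 Fin.elim0 ⊗ₜ tp K A 0 Fin.elim0) = _
    rw [TensorProduct.map_tmul, keepTP_zero _ S hS, keepTP_zero _ Sᶜ hSc, splitTP_tp]
    exact congrArg₂ (· ⊗ₜ[K] ·) (castTP_tp_comp_orderEmbOfFin hS S hS.symm _)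
      (castTP_tp_comp_orderEmbOfFin hSc Sᶜ hSc.symm _)
  | succ n ih =>
    refine linearMap_ext_tpSuccEquiv fun a x => ?_
    simp only [LinearMap.comp_apply, LinearEquiv.coe_coe, TPdiag_tpSuccEquiv, OmegaTP_tpSuccEquiv,
      TensorProduct.map_map]
    by_cases h0 : (0 : Fin (n + 1)) ∈ S
    · have h0c : (0 : Fin (n + 1)) ∉ Sᶜ := by simpa using h0
      rw [keepTP_succ_comp_of_mem _ rfl h0 (tailSet_card_mem S h0),
        keepTP_succ_comp_of_not_mem _ (tailSet_compl S).symm h0c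
          (by rw [tailSet_compl]; exact tailSet_card_not_mem Sᶜ h0c),
        TensorProduct.map_comp, LinearMap.comp_apply,
        map_lTensor_counit_tensorTensorTensorComm_comul,
        splitTP_tpSuccEquiv_of_mem h0, ← ih]
      rfl
    · have h0c : (0 : Fin (n + 1)) ∈ Sᶜ := by simpa using h0
      rw [keepTP_succ_comp_of_not_mem _ rfl h0 (tailSet_card_not_mem S h0),
        keepTP_succ_comp_of_mem _ (tailSet_compl S).symm h0c
          (by rw [tailSet_compl]; exact tailSet_card_mem Sᶜ h0c),
        TensorProduct.map_comp, LinearMap.comp_apply,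
        map_counit_lTensor_tensorTensorTensorComm_comul,
        splitTP_tpSuccEquiv_of_not_mem h0, ← ih]
      rfl

theorem shTP_comp_OmegaTP_TPdiag (n p q : ℕ) (hpq : p + q = n) :
    shTP K A Coalgebra.counit n p q hpq ∘ₗ (OmegaTP K A A n).toLinearMap
        ∘ₗ TPdiag K A Coalgebra.comul n
      = cupTP K A n p q hpq := by
  refine LinearMap.ext fun x => ?_
  simp only [shTP, cupTP, LinearMap.comp_apply, LinearMap.sum_apply, LinearMap.smul_apply]
  refine Finset.sum_congr rfl fun S _ => ?_
  rw [← map_keepTP_comp_OmegaTP_TPdiag, TensorProduct.map_comp]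
  rfl

end Bialgebra

end HopfCyclicStmt

theorem sh_rho_eq_unshuffle
    (n p q : ℕ) (hpq : p + q = n) (f : Fin n → H) :
    shTP k H (Coalgebra.counit) n p q hpq (rhoCM k H n (tp k H n f))
      = ∑ S : {S : Finset (Fin n) // S.card = p},
          shuffleSign S.1 •
            (tp k H p (fun i => f (S.1.orderIsoOfFin S.2 i))
              ⊗ₜ[k] tp k H q (fun i => f (S.1ᶜ.orderIsoOfFin (card_compl_eq hpq S.1 S.2) i))) := by
  rw [← cupTP_tp, ← shTP_comp_OmegaTP_TPdiag]
  rfl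

end
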